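/- Count of grid cubes inside a well shaped set: let m ≥ 1, let Ω ⊆ 𝕋_m be well shaped with constant C, and fix γ = (γ_1, …, γ_m) ∈ 𝕋_m. For a positive integer k, let 𝔠(k) be the collection of cubes of the form ∏_{j=1}^m [γ_j + u_j/k, γ_j + (u_j+1)/k] (taken modulo 1), u_1, …, u_m ∈ ℤ, and let C(k) be the set of cubes in 𝔠(k) that are contained in Ω. Then |#C(k) − k^m μ(Ω)| ≤ c k^{m−1}, where c depends only on m and C. -/

import Mathlib

open MeasureTheory

noncomputable section

abbrev Torus (m : ℕ) : Type := Fin m → AddCircle (1 : ℝ)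

noncomputable def tmeas {m : ℕ} (Ω : Set (Torus m)) : ℝ := (volume Ω).toReal

noncomputable def torusDist {m : ℕ} (u w : Torus m) : ℝ :=
  Real.sqrt (∑ i, dist (u i) (w i) ^ 2)

noncomputable def torusDistSet {m : ℕ} (u : Torus m) (Ω : Set (Torus m)) : ℝ :=
  ⨅ w : Ω, torusDist u (w : Torus m)

def outerShell {m : ℕ} (Ω : Set (Torus m)) (ε : ℝ) : Set (Torus m) :=
  {u | u ∉ Ω ∧ torusDistSet u Ω < ε}

def innerShell {m : ℕ} (Ω : Set (Torus m)) (ε : ℝ) : Set (Torus m) :=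
  {u | u ∈ Ω ∧ torusDistSet u Ωᶜ < ε}

def IsWellShaped {m : ℕ} (Ω : Set (Torus m)) (C : ℝ) : Prop :=
  ∀ ε : ℝ, 0 < ε →
    tmeas (outerShell Ω ε) ≤ C * ε ∧ tmeas (innerShell Ω ε) ≤ C * ε

def IsVeryWellShaped {m : ℕ} (Ω : Set (Torus m)) (C : ℝ) : Prop :=
  ∀ ε : ℝ, 0 < ε →
    tmeas (outerShell Ω ε) ≤ C * (tmeas Ω ^ (1 - 1 / (m : ℝ)) * ε + ε ^ m) ∧
    tmeas (innerShell Ω ε) ≤ C * (tmeas Ω ^ (1 - 1 / (m : ℝ)) * ε + ε ^ m)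

noncomputable def discrepancy {ι : Type*} {n : ℕ} (s : Set ι) (ξ : ι → Fin n → ℝ) : ℝ :=
  if s.ncard = 0 then 1
  else
    ⨆ B : {B : (Fin n → ℝ) × (Fin n → ℝ) // ∀ j, 0 ≤ B.1 j ∧ B.1 j ≤ B.2 j ∧ B.2 j ≤ 1},
      |((s ∩ {k | ∀ j, B.val.1 j ≤ ξ k j ∧ ξ k j < B.val.2 j}).ncard : ℝ) / (s.ncard : ℝ)
        - ∏ j, (B.val.2 j - B.val.1 j)|

noncomputable def torusPt (p : ℕ) {m : ℕ} (x : Fin m → Fin p) : Torus m :=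
  fun i => ((((x i : ℕ) : ℝ) / (p : ℝ) : ℝ) : AddCircle (1 : ℝ))

noncomputable def fracPt {p m n : ℕ} (G : Fin n → MvPolynomial (Fin m) (ZMod p))
    (x : Fin m → ℤ) : Fin n → ℝ :=
  fun j => ((MvPolynomial.eval (fun i => ((x i : ℤ) : ZMod p)) (G j)).val : ℝ) / (p : ℝ)

def Degree2Independent {p m n : ℕ} (G : Fin n → MvPolynomial (Fin m) (ZMod p)) : Prop :=
  ∀ a : Fin n → ZMod p, a ≠ 0 → 2 ≤ (∑ j, a j • G j).totalDegree

def torusIcc (a b : ℝ) : Set (AddCircle (1 : ℝ)) :=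
  (fun r : ℝ => (r : AddCircle (1 : ℝ))) '' Set.Icc a b

def gridCube {m : ℕ} (γ : Fin m → ℝ) (k : ℕ) (u : Fin m → ℤ) : Set (Torus m) :=
  {t | ∀ i, t i ∈ torusIcc (γ i + (u i : ℝ) / k) (γ i + ((u i : ℝ) + 1) / k)}

def torusCube {m : ℕ} (γ : Fin m → ℝ) (s : ℝ) : Set (Torus m) :=
  {t | ∀ i, t i ∈ torusIcc (γ i) (γ i + s)}

def cubesIn {m : ℕ} (Ω : Set (Torus m)) (γ : Fin m → ℝ) (k : ℕ) : Set (Set (Torus m)) :=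
  {Γ | (∃ u : Fin m → ℤ, Γ = gridCube γ k u) ∧ Γ ⊆ Ω}

def dyadicB {m : ℕ} (Ω : Set (Torus m)) (γ : Fin m → ℝ) (i : ℕ) : Set (Set (Torus m)) :=
  if i = 1 then cubesIn Ω γ 2
  else {Γ | Γ ∈ cubesIn Ω γ (2 ^ i) ∧ ∀ Γ' ∈ cubesIn Ω γ (2 ^ (i - 1)), ¬ Γ ⊆ Γ'}

def polySolutions (p : ℕ) {m n : ℕ} (F : Fin n → MvPolynomial (Fin m) ℤ) :
    Set (Fin m → Fin p) :=
  {x | ∀ j, ((MvPolynomial.eval (fun i => ((x i : ℕ) : ℤ)) (F j) : ℤ) : ZMod p) = 0}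

noncomputable def Tcount (p : ℕ) {m n : ℕ} (F : Fin n → MvPolynomial (Fin m) ℤ)
    (S : Set (Torus m)) : ℕ :=
  (polySolutions p F ∩ {x | torusPt p x ∈ S}).ncard

end

/-! Cut `𝕋_m` into the `k^m` grid cubes of side `1/k`; they overlap only in null sets, so the
cubes contained in `Ω` have total measure `#C(k) / k^m ≤ μ(Ω)`. A point of `Ω` outside all of them
lies in a grid cube meeting `Ωᶜ`, hence within distance `√m / k` of `Ωᶜ`: it belongs to the inner
shell `Ω_ε^-` with `ε = (√m + 1) / k`, whose measure is at most `C ε`. -/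

open Set

lemma exists_int_eq_add_of_coe_eq {x y : ℝ} (h : (x : AddCircle (1 : ℝ)) = y) :
    ∃ n : ℤ, y = x + n := by
  obtain ⟨n, hn⟩ := AddSubgroup.mem_zmultiples_iff.mp (QuotientAddGroup.eq.mp h)
  exact ⟨n, by rw [zsmul_eq_mul, mul_one] at hn; linarith⟩

lemma torusIcc_add_intCast (a b : ℝ) (n : ℤ) : torusIcc (a + n) (b + n) = torusIcc a b := by
  rw [torusIcc, ← image_add_const_Icc, image_image]
  simp [torusIcc]

lemma measurableSet_torusIcc (a b : ℝ) : MeasurableSet (torusIcc a b) :=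
  (isCompact_Icc.image (AddCircle.continuous_mk' 1)).isClosed.measurableSet

lemma dist_le_of_mem_torusIcc {a b : ℝ} {x y : AddCircle (1 : ℝ)} (hx : x ∈ torusIcc a b)
    (hy : y ∈ torusIcc a b) : dist x y ≤ b - a := by
  obtain ⟨s, hs, rfl⟩ := hx
  obtain ⟨t, ht, rfl⟩ := hy
  calc dist (s : AddCircle (1 : ℝ)) t ≤ |s - t| := by
        rw [dist_eq_norm, ← AddCircle.coe_sub]; exact QuotientAddGroup.norm_mk_le_norm
    _ ≤ b - a := abs_sub_le_iff.mpr ⟨by linarith [hs.2, ht.1], by linarith [hs.1, ht.2]⟩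

-- The extra point `γ + 1` lifts the endpoint `γ` of the arc back into `(γ, γ + 1]`.
lemma preimage_torusIcc_inter_Ioc_subset {γ a b : ℝ} (ha : γ ≤ a) (hb : b ≤ γ + 1) :
    (↑) ⁻¹' torusIcc a b ∩ Ioc γ (γ + 1) ⊆ Icc a b ∪ {γ + 1} := by
  rintro x ⟨⟨y, hy, hyx⟩, hx⟩
  obtain ⟨n, rfl⟩ := exists_int_eq_add_of_coe_eq hyx
  have hn : n = 0 ∨ n = 1 := by
    have : (-1 : ℤ) < n := by exact_mod_cast (by linarith [hy.2, hx.1] : (-1 : ℝ) < n)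
    have : n ≤ 1 := by exact_mod_cast (by linarith [hy.1, hx.2] : (n : ℝ) ≤ 1)
    omega
  rcases hn with rfl | rfl
  · left; simpa using hy
  · right; push_cast at hx ⊢; rw [mem_singleton_iff]; linarith [hx.2, hy.1]

lemma volume_torusIcc_inter_torusIcc_le {γ a b c d : ℝ} (ha : γ ≤ a) (hb : b ≤ γ + 1)
    (hc : γ ≤ c) (hd : d ≤ γ + 1) :
    volume (torusIcc a b ∩ torusIcc c d) ≤ volume (Icc a b ∩ Icc c d) := by
  rw [AddCircle.add_projection_respects_measure 1 γ
    ((measurableSet_torusIcc a b).inter (measurableSet_torusIcc c d))]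
  calc _ ≤ volume ((Icc a b ∩ Icc c d) ∪ {γ + 1}) := by
        refine measure_mono fun x ⟨⟨hab, hcd⟩, hx⟩ => ?_
        have := preimage_torusIcc_inter_Ioc_subset ha hb ⟨hab, hx⟩
        have := preimage_torusIcc_inter_Ioc_subset hc hd ⟨hcd, hx⟩
        simp_all only [mem_union, mem_inter_iff]
        tauto
    _ ≤ volume (Icc a b ∩ Icc c d) := (measure_union_le _ _).trans (by simp)

lemma volume_torusIcc {a b : ℝ} (hb : b ≤ a + 1) :
    volume (torusIcc a b) = ENNReal.ofReal (b - a) := by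
  apply le_antisymm
  · simpa using volume_torusIcc_inter_torusIcc_le le_rfl hb le_rfl hb
  · rw [AddCircle.add_projection_respects_measure 1 a (measurableSet_torusIcc a b),
      ← Real.volume_Ioc]
    exact measure_mono fun x hx => ⟨⟨x, Ioc_subset_Icc_self hx, rfl⟩, hx.1, hx.2.trans hb⟩

def gridArc (c : ℝ) (k : ℕ) (j : ℤ) : Set (AddCircle (1 : ℝ)) :=
  torusIcc (c + j / k) (c + (j + 1) / k)

section gridArc

variable {c : ℝ} {k : ℕ}

lemma gridArc_emod (hk : 0 < k) (j : ℤ) : gridArc c k (j % k) = gridArc c k j := by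
  have hk' : (k : ℝ) ≠ 0 := by positivity
  have hj : (j : ℝ) = (j % k : ℤ) + k * (j / k : ℤ) := by
    exact_mod_cast (Int.emod_add_mul_ediv j k).symm
  rw [gridArc, gridArc, ← torusIcc_add_intCast _ _ (j / k)]
  congr 1 <;> rw [hj] <;> field_simp <;> ring

lemma volume_gridArc (hk : 0 < k) (j : ℤ) :
    volume (gridArc c k j) = ENNReal.ofReal (k : ℝ)⁻¹ := by
  have hk' : (1 : ℝ) ≤ k := by exact_mod_cast hk
  have hlen : c + (j + 1) / k - (c + j / k) = (k : ℝ)⁻¹ := by ring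
  rw [gridArc, volume_torusIcc, hlen]
  linarith [inv_le_one_of_one_le₀ hk']

lemma volume_gridArc_inter_gridArc {j l : ℤ} (hj : j ∈ Finset.Ico 0 (k : ℤ))
    (hl : l ∈ Finset.Ico 0 (k : ℤ)) (hjl : j ≠ l) :
    volume (gridArc c k j ∩ gridArc c k l) = 0 := by
  have bounds : ∀ i ∈ Finset.Ico 0 (k : ℤ), c ≤ c + i / k ∧ c + (i + 1) / k ≤ c + 1 := by
    intro i hi
    rw [Finset.mem_Ico] at hi
    have hi0 : (0 : ℝ) ≤ i := by exact_mod_cast hi.1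
    have hik : (i : ℝ) + 1 ≤ k := by exact_mod_cast hi.2
    exact ⟨by simpa using div_nonneg hi0 k.cast_nonneg,
      by simpa using div_le_one_of_le₀ hik k.cast_nonneg⟩
  refine nonpos_iff_eq_zero.mp ((volume_torusIcc_inter_torusIcc_le (bounds j hj).1
    (bounds j hj).2 (bounds l hl).1 (bounds l hl).2).trans ?_)
  rw [Icc_inter_Icc, Real.volume_Icc, nonpos_iff_eq_zero, ENNReal.ofReal_eq_zero, sub_nonpos]
  rcases hjl.lt_or_gt with h | h
  · have : (j : ℝ) + 1 ≤ l := by exact_mod_cast Int.add_one_le_iff.mpr h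
    exact inf_le_left.trans (le_sup_of_le_right (by gcongr))
  · have : (l : ℝ) + 1 ≤ j := by exact_mod_cast Int.add_one_le_iff.mpr h
    exact inf_le_right.trans (le_sup_of_le_left (by gcongr))

lemma exists_mem_gridArc (hk : 0 < k) (z : AddCircle (1 : ℝ)) : ∃ j : ℤ, z ∈ gridArc c k j := by
  induction z using QuotientAddGroup.induction_on with
  | H x =>
  have hk' : (0 : ℝ) < k := by exact_mod_cast hk
  refine ⟨⌊(x - c) * k⌋, x, ⟨?_, ?_⟩, rfl⟩
  · rw [← le_sub_iff_add_le', div_le_iff₀ hk']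
    exact Int.floor_le _
  · rw [← sub_le_iff_le_add', le_div_iff₀ hk']
    exact (Int.lt_floor_add_one _).le

lemma dist_le_of_mem_gridArc {j : ℤ} {x y : AddCircle (1 : ℝ)} (hx : x ∈ gridArc c k j)
    (hy : y ∈ gridArc c k j) : dist x y ≤ (k : ℝ)⁻¹ := by
  convert dist_le_of_mem_torusIcc hx hy using 1
  ring

end gridArc

noncomputable def gridIndices (m k : ℕ) : Finset (Fin m → ℤ) :=
  Fintype.piFinset fun _ => Finset.Ico 0 (k : ℤ)

section gridCube

variable {m k : ℕ} {γ : Fin m → ℝ}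

lemma gridCube_eq_pi (u : Fin m → ℤ) :
    gridCube γ k u = univ.pi fun i => gridArc (γ i) k (u i) := by
  ext t
  simp [gridCube, gridArc]

lemma measurableSet_gridCube (u : Fin m → ℤ) : MeasurableSet (gridCube γ k u) := by
  rw [gridCube_eq_pi]
  exact .univ_pi fun i => measurableSet_torusIcc _ _

lemma measureReal_gridCube (hk : 0 < k) (u : Fin m → ℤ) :
    volume.real (gridCube γ k u) = ((k : ℝ) ^ m)⁻¹ := by
  rw [measureReal_def, gridCube_eq_pi, volume_pi_pi]
  simp [volume_gridArc hk]

lemma gridCube_emod (hk : 0 < k) (u : Fin m → ℤ) :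
    gridCube γ k (fun i => u i % k) = gridCube γ k u := by
  simp only [gridCube_eq_pi, gridArc_emod hk]

lemma emod_mem_gridIndices (hk : 0 < k) (u : Fin m → ℤ) :
    (fun i => u i % k) ∈ gridIndices m k := by
  simp only [gridIndices, Fintype.mem_piFinset, Finset.mem_Ico]
  exact fun i => ⟨Int.emod_nonneg _ (by omega), Int.emod_lt_of_pos _ (by omega)⟩

lemma exists_mem_gridCube (hk : 0 < k) (x : Torus m) :
    ∃ u ∈ gridIndices m k, x ∈ gridCube γ k u := by
  choose j hj using fun i => exists_mem_gridArc (c := γ i) hk (x i)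
  refine ⟨fun i => j i % k, emod_mem_gridIndices hk j, ?_⟩
  rw [gridCube_emod hk]
  exact hj

lemma volume_gridCube_inter_gridCube {u w : Fin m → ℤ} (hu : u ∈ gridIndices m k)
    (hw : w ∈ gridIndices m k) (huw : u ≠ w) :
    volume (gridCube γ k u ∩ gridCube γ k w) = 0 := by
  obtain ⟨i, hi⟩ := Function.ne_iff.mp huw
  rw [gridIndices, Fintype.mem_piFinset] at hu hw
  rw [volume_pi]
  refine measure_mono_null ?_
    (Measure.pi_eval_preimage_null (i := i) _
      (volume_gridArc_inter_gridArc (c := γ i) (hu i) (hw i) hi))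
  exact fun t ht => ⟨ht.1 i, ht.2 i⟩

lemma injOn_gridCube (hk : 0 < k) : InjOn (gridCube γ k) (gridIndices m k) := by
  intro u hu w hw h
  by_contra huw
  have hpos : 0 < volume.real (gridCube γ k w) := by
    rw [measureReal_gridCube hk]
    positivity
  have hnull := volume_gridCube_inter_gridCube (γ := γ) hu hw huw
  rw [h, inter_self] at hnull
  rw [measureReal_def, hnull] at hpos
  exact hpos.ne' rfl

lemma torusDist_le_of_mem_gridCube {u : Fin m → ℤ} {x y : Torus m} (hx : x ∈ gridCube γ k u)
    (hy : y ∈ gridCube γ k u) : torusDist x y ≤ √m / k := by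
  have hxy (i : Fin m) : dist (x i) (y i) ≤ (k : ℝ)⁻¹ := dist_le_of_mem_gridArc (hx i) (hy i)
  calc torusDist x y ≤ √(∑ _i : Fin m, ((k : ℝ)⁻¹) ^ 2) :=
        Real.sqrt_le_sqrt (Finset.sum_le_sum fun i _ => pow_le_pow_left₀ dist_nonneg (hxy i) 2)
    _ = √m / k := by
        rw [Finset.sum_const, Finset.card_univ, Fintype.card_fin, nsmul_eq_mul,
          Real.sqrt_mul (Nat.cast_nonneg m), Real.sqrt_sq (by positivity), div_eq_mul_inv]

end gridCube

lemma torusDistSet_le_torusDist {m : ℕ} {S : Set (Torus m)} (u : Torus m) {w : Torus m}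
    (hw : w ∈ S) : torusDistSet u S ≤ torusDist u w :=
  ciInf_le ⟨0, by rintro _ ⟨w', rfl⟩; exact Real.sqrt_nonneg _⟩ (⟨w, hw⟩ : S)

open Classical in
noncomputable def cubesInIndices {m : ℕ} (Ω : Set (Torus m)) (γ : Fin m → ℝ) (k : ℕ) :
    Finset (Fin m → ℤ) :=
  {u ∈ gridIndices m k | gridCube γ k u ⊆ Ω}

section cubesIn

variable {m k : ℕ} {Ω : Set (Torus m)} {γ : Fin m → ℝ} {u : Fin m → ℤ}

lemma mem_cubesInIndices :
    u ∈ cubesInIndices Ω γ k ↔ u ∈ gridIndices m k ∧ gridCube γ k u ⊆ Ω := by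
  simp [cubesInIndices]

lemma cubesInIndices_subset : cubesInIndices Ω γ k ⊆ gridIndices m k :=
  fun _ hu => (mem_cubesInIndices.mp hu).1

lemma cubesIn_eq_image (hk : 0 < k) :
    cubesIn Ω γ k = gridCube γ k '' (cubesInIndices Ω γ k) := by
  ext Γ
  simp only [cubesIn, Finset.mem_coe, mem_cubesInIndices, mem_ofPred_eq, mem_image]
  constructor
  · rintro ⟨⟨u, rfl⟩, hΩ⟩
    exact ⟨fun i => u i % k, ⟨emod_mem_gridIndices hk u, by rwa [gridCube_emod hk]⟩,
      gridCube_emod hk u⟩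
  · rintro ⟨u, ⟨-, hΩ⟩, rfl⟩
    exact ⟨⟨u, rfl⟩, hΩ⟩

lemma ncard_cubesIn (hk : 0 < k) : (cubesIn Ω γ k).ncard = (cubesInIndices Ω γ k).card := by
  rw [cubesIn_eq_image hk, ((injOn_gridCube hk).mono cubesInIndices_subset).ncard_image,
    ncard_coe_finset]

lemma measureReal_biUnion_gridCube (hk : 0 < k) {S : Finset (Fin m → ℤ)}
    (hS : S ⊆ gridIndices m k) :
    volume.real (⋃ u ∈ S, gridCube γ k u) = S.card / (k : ℝ) ^ m := by
  rw [measureReal_biUnion_finset₀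
    (fun u hu w hw huw => volume_gridCube_inter_gridCube (hS hu) (hS hw) huw)
    (fun u _ => (measurableSet_gridCube u).nullMeasurableSet)]
  simp [measureReal_gridCube hk, div_eq_mul_inv]

lemma subset_biUnion_cubesInIndices_union_innerShell (hk : 0 < k) {ε : ℝ} (hε : √m / k < ε) :
    Ω ⊆ (⋃ u ∈ cubesInIndices Ω γ k, gridCube γ k u) ∪ innerShell Ω ε := by
  intro x hx
  obtain ⟨u, hu, hxu⟩ := exists_mem_gridCube (γ := γ) hk x
  by_cases hΩ : gridCube γ k u ⊆ Ω
  · exact Or.inl (mem_iUnion₂.mpr ⟨u, mem_cubesInIndices.mpr ⟨hu, hΩ⟩, hxu⟩)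
  · obtain ⟨y, hyu, hyΩ⟩ := not_subset.mp hΩ
    exact Or.inr ⟨hx, (torusDistSet_le_torusDist x hyΩ).trans_lt
      ((torusDist_le_of_mem_gridCube hxu hyu).trans_lt hε)⟩

lemma ncard_cubesIn_le (hk : 0 < k) : ((cubesIn Ω γ k).ncard : ℝ) ≤ k ^ m * tmeas Ω := by
  have h := measureReal_mono (μ := volume)
    (iUnion₂_subset fun u hu => (mem_cubesInIndices.mp hu).2 :
      ⋃ u ∈ cubesInIndices Ω γ k, gridCube γ k u ⊆ Ω)
  rw [measureReal_biUnion_gridCube hk cubesInIndices_subset, div_le_iff₀ (by positivity)] at h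
  rw [ncard_cubesIn hk, mul_comm]
  exact h

lemma le_ncard_cubesIn_add (hk : 0 < k) {ε : ℝ} (hε : √m / k < ε) :
    k ^ m * tmeas Ω ≤ (cubesIn Ω γ k).ncard + k ^ m * tmeas (innerShell Ω ε) := by
  have h := (measureReal_mono (μ := volume)
    (subset_biUnion_cubesInIndices_union_innerShell hk hε)).trans (measureReal_union_le _ _)
  rw [measureReal_biUnion_gridCube hk cubesInIndices_subset] at h
  have hkm : (0 : ℝ) < k ^ m := by positivity
  calc (k : ℝ) ^ m * tmeas Ω
      ≤ k ^ m * ((cubesInIndices Ω γ k).card / k ^ m + tmeas (innerShell Ω ε)) := by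
        gcongr
        exact h
    _ = (cubesIn Ω γ k).ncard + k ^ m * tmeas (innerShell Ω ε) := by
        rw [ncard_cubesIn hk]; field_simp

end cubesIn

theorem cubesIn_count_well_shaped_general (m : ℕ) (C : ℝ) :
    ∃ c : ℝ, 0 < c ∧
      ∀ Ω : Set (Torus m), IsWellShaped Ω C → ∀ γ : Fin m → ℝ, ∀ k : ℕ, 0 < k →
        |((cubesIn Ω γ k).ncard : ℝ) - (k : ℝ) ^ m * tmeas Ω| ≤ c * (k : ℝ) ^ (m - 1) := by
  refine ⟨|C| * (√m + 1) + 1, by positivity, fun Ω hΩ γ k hk => ?_⟩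
  have hk' : (1 : ℝ) ≤ k := by exact_mod_cast hk
  have hε : √m / k < (√m + 1) / k := by gcongr; linarith
  set ε := (√m + 1) / k
  have hshell : (k : ℝ) ^ m * tmeas (innerShell Ω ε) ≤ |C| * (√m + 1) * k ^ (m - 1) :=
    calc (k : ℝ) ^ m * tmeas (innerShell Ω ε) ≤ k ^ m * (|C| * ε) := by
          gcongr
          exact (hΩ ε (by positivity)).2.trans
            (mul_le_mul_of_nonneg_right (le_abs_self C) (by positivity))
      _ = |C| * (√m + 1) * (k ^ m / k) := by ring
      _ ≤ |C| * (√m + 1) * k ^ (m - 1) := by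
          gcongr
          rw [div_le_iff₀ (by positivity), ← pow_succ]
          exact pow_le_pow_right₀ hk' (by omega)
  have hlow := ncard_cubesIn_le (Ω := Ω) (γ := γ) hk
  have hup := le_ncard_cubesIn_add (Ω := Ω) (γ := γ) hk hε
  have hpow : 0 ≤ (k : ℝ) ^ (m - 1) := by positivity
  rw [abs_le]
  constructor <;> nlinarith

/-- Count of grid cubes of side `1/k` (anchored at `γ`) contained in a well shaped set:
`|#C(k) − k^m μ(Ω)| ≤ c k^{m−1}` with `c = c(m,C)`. -/
theorem cubesIn_count_well_shaped (m : ℕ) (hm : 1 ≤ m) (C : ℝ) :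
    ∃ c : ℝ, 0 < c ∧
      ∀ Ω : Set (Torus m), IsWellShaped Ω C → ∀ γ : Fin m → ℝ, ∀ k : ℕ, 0 < k →
        |((cubesIn Ω γ k).ncard : ℝ) - (k : ℝ) ^ m * tmeas Ω| ≤ c * (k : ℝ) ^ (m - 1) :=
  cubesIn_count_well_shaped_general m C
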